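/- Let E = [−2π, −π) ∪ [π, 2π) (the Shannon wavelet set) and let F be any dyadic wavelet set. If D_E^F = D_F^E modulo Lebesgue-null sets, then (E, F) is an interpolation pair, i.e. σ_E^F ∘ σ_E^F = id_ℝ almost everywhere. -/

import Mathlib

open MeasureTheory Set
open scoped Real symmDiff

noncomputable section

/-- An a.e. (modulo Lebesgue-null sets) partition of the set `A` by the family `P`. -/
def IsAEPartition {ι : Type*} (P : ι → Set ℝ) (A : Set ℝ) : Prop :=
  volume (A ∆ (⋃ i, P i)) = 0 ∧ ∀ i j : ι, i ≠ j → volume (P i ∩ P j) = 0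

/-- `E ⊆ ℝ` is a dyadic wavelet set: its `2πℤ`-translates and its `2ℤ`-dilates each
partition `ℝ` modulo Lebesgue-null sets. -/
def IsDyadicWaveletSet (E : Set ℝ) : Prop :=
  MeasurableSet E ∧
  (∀ᵐ x : ℝ ∂volume, ∃! n : ℤ, x + 2 * Real.pi * n ∈ E) ∧
  (∀ᵐ x : ℝ ∂volume, ∃! k : ℤ, (2 : ℝ) ^ k * x ∈ E)

/-- `σ` is (a representative of) the interpolation map `σ_E^F` for wavelet sets `E, F`. -/
def IsInterpolationMap (E F : Set ℝ) (σ : ℝ → ℝ) : Prop :=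
  Measurable σ ∧ σ 0 = 0 ∧
  (∀ᵐ s : ℝ ∂volume, s ∈ E → σ s ∈ F ∧ ∃ n : ℤ, σ s - s = 2 * Real.pi * n) ∧
  (∀ n : ℤ, ∀ᵐ s : ℝ ∂volume, (2 : ℝ) ^ (-n) * s ∈ E →
    σ s = (2 : ℝ) ^ n * σ ((2 : ℝ) ^ (-n) * s))

/-- The `2π`-congruence domain of a map `σ`. -/
def CongruenceDomain (σ : ℝ → ℝ) : Set ℝ :=
  {s : ℝ | ∃ n : ℤ, σ s - s = 2 * Real.pi * n}

/-- `A` is `2π`-translation congruent to `B`. -/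
def TransCongruent (A B : Set ℝ) : Prop :=
  ∃ P : ℤ → Set ℝ, (∀ n, MeasurableSet (P n)) ∧ IsAEPartition P A ∧
    IsAEPartition (fun (n : ℤ) => (fun x => x + 2 * Real.pi * (n : ℝ)) '' P n) B

/-- `A` is `2`-dilation congruent to `B`. -/
def DilCongruent (A B : Set ℝ) : Prop :=
  ∃ P : ℤ → Set ℝ, (∀ n, MeasurableSet (P n)) ∧ IsAEPartition P A ∧
    IsAEPartition (fun (n : ℤ) => (fun x => (2 : ℝ) ^ n * x) '' P n) B

/-!
Restrict to a conull set that is invariant under `σ`, `τ` and the dilations `x ↦ 2ᵏ x` and on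
which every hypothesis holds pointwise. There both maps commute with dilations, `τ ∘ σ = id` on
`E`, `σ ∘ τ = id` on `F`, and `D_E^F = D_F^E` says that
`2ᵏ (σ x - x) ∈ 2πℤ ↔ 2ᵏ (τ x - x) ∈ 2πℤ` for every `k`. For `u ∈ F` the point `τ u` lies in the
Shannon set, which forces `τ u - u` to be `0` or a jump of length `2π · 2ᵏ` across the origin; by
dilation and the symmetry `τ (σ w) = w` the same holds for every displacement `σ x - x` and
`τ x - x`. Two such jumps from the same point with the same pattern of memberships in `2πℤ`
coincide, so `σ = τ`, and `σ ∘ σ = σ ∘ τ = id`.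
-/

open Real

def shannonSet : Set ℝ := Ico (-(2 * π)) (-π) ∪ Ico π (2 * π)

lemma two_zpow_mul_two_zpow_mul (i j : ℤ) (x : ℝ) :
    (2 : ℝ) ^ i * ((2 : ℝ) ^ j * x) = 2 ^ (i + j) * x := by
  rw [← mul_assoc, ← zpow_add₀ two_ne_zero]

lemma exists_int_eq_two_zpow_iff {m : ℤ} : (∃ n : ℤ, (2 : ℝ) ^ m = n) ↔ 0 ≤ m := by
  refine ⟨fun ⟨n, hn⟩ => ?_, fun hm => ?_⟩
  · by_contra! hm
    have h0 : (0 : ℤ) < n := by exact_mod_cast hn ▸ zpow_pos two_pos m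
    have h1 : n < 1 := by exact_mod_cast hn ▸ zpow_lt_one_of_neg₀ one_lt_two hm
    omega
  · lift m to ℕ using hm
    exact ⟨2 ^ m, by simp⟩

lemma exists_int_eq_two_pi_mul_iff_abs {r : ℝ} :
    (∃ n : ℤ, r = 2 * π * n) ↔ ∃ n : ℤ, |r| = 2 * π * n := by
  refine ⟨fun ⟨n, hn⟩ => ⟨|n|, ?_⟩, fun ⟨n, hn⟩ => ?_⟩
  · rw [hn, abs_mul, abs_of_pos two_pi_pos, Int.cast_abs]
  · rcases abs_choice r with h | h
    · exact ⟨n, h ▸ hn⟩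
    · exact ⟨-n, by push_cast; linarith⟩

lemma exists_two_zpow_mul_eq_two_pi_mul_iff {d : ℝ} {k : ℤ} (hd : |d| = 2 * π * 2 ^ k) (i : ℤ) :
    (∃ n : ℤ, 2 ^ i * d = 2 * π * n) ↔ 0 ≤ i + k := by
  have habs : |2 ^ i * d| = 2 * π * 2 ^ (i + k) := by
    rw [abs_mul, abs_of_pos (zpow_pos two_pos i), hd, zpow_add₀ two_ne_zero]
    ring
  rw [exists_int_eq_two_pi_mul_iff_abs, habs, ← exists_int_eq_two_zpow_iff]
  simp only [mul_right_inj' two_pi_pos.ne']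

lemma abs_eq_two_zpow_max_of_lt {b j : ℤ} (hb : b ≠ 0) (hdvd : ∃ z : ℤ, (2 : ℝ) ^ j * b = z)
    (hlt : |(b : ℝ)| < 1 + 2 ^ (-j)) : |(b : ℝ)| = 2 ^ max (-j) 0 := by
  rw [← Int.cast_abs] at hlt ⊢
  have hb1 : 1 ≤ |b| := Int.one_le_abs hb
  rcases le_or_gt 0 j with hj | hj
  · rw [max_eq_right (by omega), zpow_zero]
    have : |b| < 2 := by
      have := zpow_le_one_of_nonpos₀ (one_le_two : (1 : ℝ) ≤ 2) (neg_nonpos.2 hj)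
      exact_mod_cast (by linarith : ((|b| : ℤ) : ℝ) < 2)
    norm_cast
    omega
  · obtain ⟨m, rfl⟩ : ∃ m : ℕ, j = -m := ⟨(-j).toNat, by omega⟩
    obtain ⟨z, hz⟩ := hdvd
    rw [neg_neg, max_eq_left (by omega), zpow_natCast] at *
    have hbz : b = 2 ^ m * z := by
      rw [zpow_neg, zpow_natCast] at hz
      have : (b : ℝ) = 2 ^ m * z := by rw [← hz]; field_simp
      exact_mod_cast this
    have hlt' : |b| < 1 + 2 ^ m := by exact_mod_cast hlt
    have hpow : (1 : ℤ) ≤ 2 ^ m := one_le_pow₀ one_le_two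
    rw [hbz, abs_mul, abs_of_pos (by positivity)] at hlt' hb1 ⊢
    have hz1 : |z| = 1 := by nlinarith [abs_nonneg z]
    rw [hz1, mul_one]
    norm_cast

lemma eq_of_mem_shannonSet_of_sub_eq {x y : ℝ} (hx : x ∈ shannonSet) (hy : y ∈ shannonSet)
    {n : ℤ} (h : y - x = 2 * π * n) : y = x := by
  have hπ := pi_pos
  obtain rfl : n = 0 := by
    rcases hx with ⟨hx1, hx2⟩ | ⟨hx1, hx2⟩ <;> rcases hy with ⟨hy1, hy2⟩ | ⟨hy1, hy2⟩
    · have : n < 1 := by exact_mod_cast (by nlinarith : (n : ℝ) < 1)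
      have : -1 < n := by exact_mod_cast (by nlinarith : (-1 : ℝ) < n)
      omega
    · have : n < 2 := by exact_mod_cast (by nlinarith : (n : ℝ) < 2)
      have : 1 < n := by exact_mod_cast (by nlinarith : (1 : ℝ) < n)
      omega
    · have : n < -1 := by exact_mod_cast (by nlinarith : (n : ℝ) < -1)
      have : -2 < n := by exact_mod_cast (by nlinarith : (-2 : ℝ) < n)
      omega
    · have : n < 1 := by exact_mod_cast (by nlinarith : (n : ℝ) < 1)
      have : -1 < n := by exact_mod_cast (by nlinarith : (-1 : ℝ) < n)
      omega
  simpa [sub_eq_zero] using h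

lemma exists_two_zpow_mul_mem_shannonSet {x : ℝ} (hx : x ≠ 0) :
    ∃ j : ℤ, (2 : ℝ) ^ j * x ∈ shannonSet := by
  have hπ := pi_pos
  rcases hx.lt_or_gt with hneg | hpos
  · -- `Int.clog` rather than `Int.log`, to land in the half-open interval `[-2π, -π)`
    set c := Int.clog 2 (-x / π)
    have hle : -x / π ≤ 2 ^ c := by
      exact_mod_cast Int.self_le_zpow_clog (R := ℝ) (b := 2) one_lt_two (-x / π)
    have hlt : (2 : ℝ) ^ (c - 1) < -x / π := by
      exact_mod_cast Int.zpow_pred_clog_lt_self (b := 2) one_lt_two (div_pos (neg_pos.2 hneg) hπ)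
    have hc : (2 : ℝ) ^ c = 2 * 2 ^ (c - 1) := by
      rw [← zpow_one_add₀ two_ne_zero]; ring_nf
    have ha : (0 : ℝ) < 2 ^ (c - 1) := zpow_pos two_pos _
    refine ⟨-(c - 1), Or.inl ⟨?_, ?_⟩⟩
    · rw [zpow_neg, inv_mul_eq_div, le_div_iff₀ ha]
      rw [div_le_iff₀ hπ, hc] at hle
      linarith
    · rw [zpow_neg, inv_mul_eq_div, div_lt_iff₀ ha]
      rw [lt_div_iff₀ hπ] at hlt
      linarith
  · set k := Int.log 2 (x / π)
    have hle : (2 : ℝ) ^ k ≤ x / π := by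
      exact_mod_cast Int.zpow_log_le_self (b := 2) one_lt_two (by positivity : 0 < x / π)
    have hlt : x / π < 2 ^ (k + 1) := by
      exact_mod_cast Int.lt_zpow_succ_log_self (R := ℝ) (b := 2) one_lt_two (x / π)
    have ha : (0 : ℝ) < 2 ^ k := zpow_pos two_pos _
    refine ⟨-k, Or.inr ⟨?_, ?_⟩⟩
    · rw [zpow_neg, inv_mul_eq_div, le_div_iff₀ ha]
      rw [le_div_iff₀ hπ] at hle
      linarith
    · rw [zpow_neg, inv_mul_eq_div, div_lt_iff₀ ha]
      rw [div_lt_iff₀ hπ, zpow_add_one₀ two_ne_zero] at hlt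
      linarith

lemma abs_lt_two_pi_of_mem_shannonSet {x : ℝ} (hx : x ∈ shannonSet) (hx' : x ≠ -(2 * π)) :
    |x| < 2 * π := by
  have hπ := pi_pos
  rcases hx with ⟨h1, h2⟩ | ⟨h1, h2⟩
  · rw [abs_lt]; constructor <;> [exact lt_of_le_of_ne h1 hx'.symm; linarith]
  · rw [abs_lt]; constructor <;> linarith

lemma mul_neg_of_mem_shannonSet {t u : ℝ} (ht : t ∈ shannonSet) (hu : u ≠ 0) {b : ℤ}
    (hb : t - u = 2 * π * b) (hlt : |u| < 2 * π * |(b : ℝ)|) : u * t < 0 := by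
  have hπ := pi_pos
  rw [abs_lt] at hlt
  rcases lt_trichotomy b 0 with hb0 | rfl | hb0
  · have hb1 : (b : ℝ) ≤ -1 := by exact_mod_cast Int.le_sub_one_of_lt hb0
    rw [abs_of_neg (by exact_mod_cast hb0)] at hlt
    rcases ht with ⟨h1, h2⟩ | ⟨h1, h2⟩
    · have : 0 < u := lt_of_le_of_ne (by nlinarith) hu.symm
      nlinarith
    · nlinarith
  · simp only [Int.cast_zero, abs_zero, mul_zero] at hlt
    linarith
  · have hb1 : (1 : ℝ) ≤ b := by exact_mod_cast hb0
    rw [abs_of_pos (by exact_mod_cast hb0)] at hlt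
    rcases ht with ⟨h1, h2⟩ | ⟨h1, h2⟩
    · nlinarith
    · have : u < 0 := by nlinarith
      nlinarith

def IsDyadicJump (x y : ℝ) : Prop :=
  y = x ∨ x * y < 0 ∧ ∃ k : ℤ, |y - x| = 2 * π * 2 ^ k

lemma IsDyadicJump.symm {x y : ℝ} (h : IsDyadicJump x y) : IsDyadicJump y x := by
  rcases h with rfl | ⟨hxy, k, hk⟩
  · exact Or.inl rfl
  · exact Or.inr ⟨by linarith, k, by rwa [abs_sub_comm]⟩

lemma IsDyadicJump.two_zpow_mul {x y : ℝ} (h : IsDyadicJump x y) (i : ℤ) :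
    IsDyadicJump (2 ^ i * x) (2 ^ i * y) := by
  rcases h with rfl | ⟨hxy, k, hk⟩
  · exact Or.inl rfl
  · have h2 : (0 : ℝ) < 2 ^ i := zpow_pos two_pos i
    refine Or.inr ⟨by nlinarith [mul_pos h2 h2], i + k, ?_⟩
    rw [← mul_sub, abs_mul, abs_of_pos h2, hk, zpow_add₀ two_ne_zero]
    ring

lemma IsDyadicJump.of_two_zpow_mul {x y : ℝ} {i : ℤ} (h : IsDyadicJump (2 ^ i * x) (2 ^ i * y)) :
    IsDyadicJump x y := by
  simpa only [two_zpow_mul_two_zpow_mul, neg_add_cancel, zpow_zero, one_mul] using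
    h.two_zpow_mul (-i)

lemma IsDyadicJump.eq_of_forall_exists_iff {x y z : ℝ} (hy : IsDyadicJump x y)
    (hz : IsDyadicJump x z)
    (h : ∀ i : ℤ, (∃ n : ℤ, 2 ^ i * (y - x) = 2 * π * n) ↔ ∃ n : ℤ, 2 ^ i * (z - x) = 2 * π * n) :
    y = z := by
  have hzero : ∀ i : ℤ, ∃ n : ℤ, (2 : ℝ) ^ i * (x - x) = 2 * π * n := fun i => ⟨0, by simp⟩
  rcases hy with rfl | ⟨hxy, k, hk⟩ <;> rcases hz with rfl | ⟨hxz, l, hl⟩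
  · rfl
  · have := (exists_two_zpow_mul_eq_two_pi_mul_iff hl (-l - 1)).1 ((h _).1 (hzero _))
    omega
  · have := (exists_two_zpow_mul_eq_two_pi_mul_iff hk (-k - 1)).1 ((h _).2 (hzero _))
    omega
  · have hkl : k = l := by
      have h1 := (exists_two_zpow_mul_eq_two_pi_mul_iff hl (-k)).1
        ((h _).1 ((exists_two_zpow_mul_eq_two_pi_mul_iff hk (-k)).2 (by omega)))
      have h2 := (exists_two_zpow_mul_eq_two_pi_mul_iff hk (-l)).1
        ((h _).2 ((exists_two_zpow_mul_eq_two_pi_mul_iff hl (-l)).2 (by omega)))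
      omega
    rw [hkl, ← hl] at hk
    -- `y` and `z` both lie on the side of `0` opposite to `x`
    rcases abs_eq_abs.1 hk with h' | h' <;> nlinarith [sq_nonneg x]

structure IsInterpolationMapAt (A B : Set ℝ) (σ : ℝ → ℝ) (x : ℝ) : Prop where
  mem : x ∈ A → σ x ∈ B ∧ ∃ n : ℤ, σ x - x = 2 * π * n
  dilate : ∀ n : ℤ, (2 : ℝ) ^ (-n) * x ∈ A → σ x = 2 ^ n * σ (2 ^ (-n) * x)

lemma IsInterpolationMap.ae_isInterpolationMapAt {A B : Set ℝ} {σ : ℝ → ℝ}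
    (h : IsInterpolationMap A B σ) : ∀ᵐ x, IsInterpolationMapAt A B σ x := by
  filter_upwards [h.2.2.1, ae_all_iff.2 h.2.2.2] with x h1 h2 using ⟨h1, h2⟩

lemma map_two_zpow_mul_of_isInterpolationMapAt {A B G : Set ℝ} {σ : ℝ → ℝ}
    (hσ : ∀ y ∈ G, IsInterpolationMapAt A B σ y)
    (hG : ∀ k : ℤ, MapsTo ((2 : ℝ) ^ k * ·) G G) {x : ℝ} (hx : x ∈ G) {j : ℤ}
    (hj : (2 : ℝ) ^ j * x ∈ A) (i : ℤ) : σ (2 ^ i * x) = 2 ^ i * σ x := by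
  have h1 := (hσ x hx).dilate (-j) (by rwa [neg_neg])
  have h2 := (hσ _ (hG i hx)).dilate (i - j)
    (by rwa [two_zpow_mul_two_zpow_mul, show -(i - j) + i = j by ring])
  rw [h2, h1, two_zpow_mul_two_zpow_mul, neg_neg, two_zpow_mul_two_zpow_mul,
    show -(i - j) + i = j by ring]
  ring_nf

structure IsGoodPoint (F : Set ℝ) (σ τ : ℝ → ℝ) (x : ℝ) : Prop where
  ne_zero : x ≠ 0
  ne_neg_two_pi : x ≠ -(2 * π)
  sigma : IsInterpolationMapAt shannonSet F σ x
  tau : IsInterpolationMapAt F shannonSet τ x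
  mem_congruenceDomain_iff : x ∈ CongruenceDomain σ ↔ x ∈ CongruenceDomain τ
  existsUnique_add_mem : ∃! n : ℤ, x + 2 * π * n ∈ F
  exists_two_zpow_mul_mem : ∃ k : ℤ, (2 : ℝ) ^ k * x ∈ F

structure IsGoodSet (F : Set ℝ) (σ τ : ℝ → ℝ) (G : Set ℝ) : Prop where
  mapsTo_sigma : MapsTo σ G G
  mapsTo_tau : MapsTo τ G G
  mapsTo_two_zpow_mul : ∀ k : ℤ, MapsTo ((2 : ℝ) ^ k * ·) G G
  isGoodPoint : ∀ x ∈ G, IsGoodPoint F σ τ x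

namespace IsGoodSet

variable {F G : Set ℝ} {σ τ : ℝ → ℝ} (hG : IsGoodSet F σ τ G) {x : ℝ}
include hG

lemma sigma_two_zpow_mul (hx : x ∈ G) (i : ℤ) : σ (2 ^ i * x) = 2 ^ i * σ x :=
  have ⟨_, hj⟩ := exists_two_zpow_mul_mem_shannonSet (hG.isGoodPoint x hx).ne_zero
  map_two_zpow_mul_of_isInterpolationMapAt (fun y hy => (hG.isGoodPoint y hy).sigma)
    hG.mapsTo_two_zpow_mul hx hj i

lemma tau_two_zpow_mul (hx : x ∈ G) (i : ℤ) : τ (2 ^ i * x) = 2 ^ i * τ x :=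
  have ⟨_, hj⟩ := (hG.isGoodPoint x hx).exists_two_zpow_mul_mem
  map_two_zpow_mul_of_isInterpolationMapAt (fun y hy => (hG.isGoodPoint y hy).tau)
    hG.mapsTo_two_zpow_mul hx hj i

lemma exists_two_pi_mul_iff (hx : x ∈ G) (i : ℤ) :
    (∃ n : ℤ, 2 ^ i * (σ x - x) = 2 * π * n) ↔ ∃ n : ℤ, 2 ^ i * (τ x - x) = 2 * π * n := by
  simpa only [CongruenceDomain, mem_ofPred_eq, hG.sigma_two_zpow_mul hx,
    hG.tau_two_zpow_mul hx, mul_sub] using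
    (hG.isGoodPoint _ (hG.mapsTo_two_zpow_mul i hx)).mem_congruenceDomain_iff

lemma tau_sigma_of_mem (hx : x ∈ G) (hxE : x ∈ shannonSet) : τ (σ x) = x := by
  obtain ⟨hσF, n, hn⟩ := (hG.isGoodPoint x hx).sigma.mem hxE
  obtain ⟨hτE, m, hm⟩ := (hG.isGoodPoint _ (hG.mapsTo_sigma hx)).tau.mem hσF
  exact eq_of_mem_shannonSet_of_sub_eq hxE hτE (n := n + m) (by push_cast; linarith)

lemma sigma_tau_of_mem (hx : x ∈ G) (hxF : x ∈ F) : σ (τ x) = x := by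
  obtain ⟨hτE, m, hm⟩ := (hG.isGoodPoint x hx).tau.mem hxF
  obtain ⟨hσF, n, hn⟩ := (hG.isGoodPoint _ (hG.mapsTo_tau hx)).sigma.mem hτE
  have hmn : m + n = 0 := (hG.isGoodPoint x hx).existsUnique_add_mem.unique
    (by convert hσF using 1; push_cast; linarith) (by simpa using hxF)
  have : (m : ℝ) + n = 0 := by exact_mod_cast hmn
  linear_combination hn + hm + 2 * π * this

lemma sigma_tau (hx : x ∈ G) : σ (τ x) = x := by
  obtain ⟨k, hk⟩ := (hG.isGoodPoint x hx).exists_two_zpow_mul_mem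
  have hu := hG.mapsTo_two_zpow_mul k hx
  have hxu : x = 2 ^ (-k) * (2 ^ k * x) := by
    rw [two_zpow_mul_two_zpow_mul, neg_add_cancel, zpow_zero, one_mul]
  calc σ (τ x) = σ (τ (2 ^ (-k) * (2 ^ k * x))) := by rw [← hxu]
    _ = 2 ^ (-k) * σ (τ (2 ^ k * x)) := by
      rw [hG.tau_two_zpow_mul hu, hG.sigma_two_zpow_mul (hG.mapsTo_tau hu)]
    _ = x := by rw [hG.sigma_tau_of_mem hu hk, ← hxu]

lemma isDyadicJump_tau_of_mem (hx : x ∈ G) (hxF : x ∈ F) : IsDyadicJump x (τ x) := by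
  -- With `2ʲ x ∈ E`, the matching at scale `2ʲ` makes `2ʲ b` an integer, while `|x| < 2π · 2⁻ʲ`
  -- and `|τ x| < 2π` give `|b| < 1 + 2⁻ʲ`; so `|b|` is a power of two and `|x| < 2π |b|`.
  have hπ := pi_pos
  obtain ⟨hτE, b, hb⟩ := (hG.isGoodPoint x hx).tau.mem hxF
  rcases eq_or_ne b 0 with rfl | hb0
  · exact Or.inl (by simpa [sub_eq_zero] using hb)
  obtain ⟨j, hj⟩ := exists_two_zpow_mul_mem_shannonSet (hG.isGoodPoint x hx).ne_zero
  have hwG := hG.mapsTo_two_zpow_mul j hx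
  obtain ⟨-, n, hn⟩ := (hG.isGoodPoint _ hwG).sigma.mem hj
  have hdvd : ∃ z : ℤ, (2 : ℝ) ^ j * b = z := by
    obtain ⟨z, hz⟩ := (hG.exists_two_pi_mul_iff hx j).1
      ⟨n, by rw [mul_sub, ← hG.sigma_two_zpow_mul hx]; exact hn⟩
    exact ⟨z, by rw [hb] at hz; nlinarith⟩
  have h2j : (0 : ℝ) < 2 ^ j := zpow_pos two_pos j
  have hx_lt : |x| < 2 * π * 2 ^ (-j) := by
    have := abs_lt_two_pi_of_mem_shannonSet hj (hG.isGoodPoint _ hwG).ne_neg_two_pi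
    rw [abs_mul, abs_of_pos h2j] at this
    rw [zpow_neg, lt_mul_inv_iff₀ h2j]
    linarith
  have hb_abs : |(b : ℝ)| = 2 ^ max (-j) 0 := by
    refine abs_eq_two_zpow_max_of_lt hb0 hdvd ?_
    have hτ_lt := abs_lt_two_pi_of_mem_shannonSet hτE
      (hG.isGoodPoint _ (hG.mapsTo_tau hx)).ne_neg_two_pi
    have : 2 * π * |(b : ℝ)| ≤ |τ x| + |x| := by
      rw [← abs_of_pos two_pi_pos, ← abs_mul, ← hb]
      exact abs_sub _ _
    nlinarith
  have hx_lt' : |x| < 2 * π * |(b : ℝ)| := by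
    rw [hb_abs]
    exact hx_lt.trans_le (by gcongr; exacts [one_le_two, le_max_left _ _])
  refine Or.inr ⟨mul_neg_of_mem_shannonSet hτE (hG.isGoodPoint x hx).ne_zero (by linarith)
    hx_lt', max (-j) 0, ?_⟩
  rw [hb, abs_mul, abs_of_pos two_pi_pos, hb_abs]

lemma isDyadicJump_tau (hx : x ∈ G) : IsDyadicJump x (τ x) := by
  obtain ⟨k, hk⟩ := (hG.isGoodPoint x hx).exists_two_zpow_mul_mem
  have hu := hG.mapsTo_two_zpow_mul k hx
  exact IsDyadicJump.of_two_zpow_mul (i := k)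
    (hG.tau_two_zpow_mul hx k ▸ hG.isDyadicJump_tau_of_mem hu hk)

lemma isDyadicJump_sigma (hx : x ∈ G) : IsDyadicJump x (σ x) := by
  obtain ⟨j, hj⟩ := exists_two_zpow_mul_mem_shannonSet (hG.isGoodPoint x hx).ne_zero
  have hw := hG.mapsTo_two_zpow_mul j hx
  have hjump :=
    hG.isDyadicJump_tau_of_mem (hG.mapsTo_sigma hw) ((hG.isGoodPoint _ hw).sigma.mem hj).1
  rw [hG.tau_sigma_of_mem hw hj, hG.sigma_two_zpow_mul hx] at hjump
  exact hjump.symm.of_two_zpow_mul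

lemma sigma_eq_tau (hx : x ∈ G) : σ x = τ x :=
  (hG.isDyadicJump_sigma hx).eq_of_forall_exists_iff (hG.isDyadicJump_tau hx)
    (hG.exists_two_pi_mul_iff hx)

lemma sigma_sigma (hx : x ∈ G) : σ (σ x) = x := by
  rw [hG.sigma_eq_tau hx, hG.sigma_tau hx]

end IsGoodSet

lemma exists_ae_mem_mapsTo {α : Type*} [MeasurableSpace α] {μ : Measure α} {S : Set (α → α)}
    (hS : S.Countable) (hQ : ∀ f ∈ S, Measure.QuasiMeasurePreserving f μ μ) {p : α → Prop}
    (hp : ∀ᵐ x ∂μ, p x) :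
    ∃ G : Set α, (∀ᵐ x ∂μ, x ∈ G) ∧ (∀ x ∈ G, p x) ∧ ∀ f ∈ S, MapsTo f G G := by
  have := hS.to_subtype
  let comp (l : List S) (x : α) : α := l.foldr (fun f y => f.1 y) x
  have hcomp (l : List S) : Measure.QuasiMeasurePreserving (comp l) μ μ := by
    induction l with
    | nil => exact Measure.QuasiMeasurePreserving.id μ
    | cons f l ih => exact (hQ f f.2).comp ih
  refine ⟨{x | ∀ l, p (comp l x)}, ae_all_iff.2 fun l => (hcomp l).ae hp, fun x hx => hx [], ?_⟩
  intro f hf x hx l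
  have : comp (l ++ [⟨f, hf⟩]) x = comp l (f x) := List.foldr_append
  exact this ▸ hx (l ++ [⟨f, hf⟩])

lemma quasiMeasurePreserving_of_ae_sub_mem {f : ℝ → ℝ} (hf : Measurable f) {C : Set ℝ}
    (hC : C.Countable) (h : ∀ᵐ x, f x - x ∈ C) :
    Measure.QuasiMeasurePreserving f volume volume := by
  refine ⟨hf, Measure.AbsolutelyContinuous.mk fun s hs hs0 => ?_⟩
  rw [Measure.map_apply hf hs]
  have hsub : f ⁻¹' s ⊆ {x | f x - x ∉ C} ∪ ⋃ c ∈ C, (· + c) ⁻¹' s := by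
    intro x hx
    by_cases hxC : f x - x ∈ C
    · exact Or.inr (mem_biUnion hxC (by simpa using hx))
    · exact Or.inl hxC
  refine measure_mono_null hsub (measure_union_null h ?_)
  exact (measure_biUnion_null_iff hC).2 fun c _ => by rwa [measure_preimage_add_right]

lemma quasiMeasurePreserving_two_zpow_mul (k : ℤ) :
    Measure.QuasiMeasurePreserving ((2 : ℝ) ^ k * ·) volume volume :=
  Measure.quasiMeasurePreserving_smul volume (zpow_ne_zero k two_ne_zero)

lemma IsInterpolationMap.quasiMeasurePreserving {A B : Set ℝ} {σ : ℝ → ℝ}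
    (h : IsInterpolationMap A B σ) (hA : ∀ᵐ x, ∃ k : ℤ, (2 : ℝ) ^ k * x ∈ A) :
    Measure.QuasiMeasurePreserving σ volume volume := by
  refine quasiMeasurePreserving_of_ae_sub_mem h.1 (countable_range fun q : ℚ => (q : ℝ) * π) ?_
  have hdil : ∀ᵐ x, ∀ k : ℤ, IsInterpolationMapAt A B σ (2 ^ k * x) :=
    ae_all_iff.2 fun k => (quasiMeasurePreserving_two_zpow_mul k).ae h.ae_isInterpolationMapAt
  filter_upwards [hA, hdil, h.ae_isInterpolationMapAt] with x ⟨k, hk⟩ hdil hx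
  obtain ⟨n, hn⟩ := ((hdil k).mem hk).2
  refine ⟨2 ^ (-k) * 2 * n, ?_⟩
  rw [hx.dilate (-k) (by rwa [neg_neg]), neg_neg]
  have h2k : (2 : ℝ) ^ (-k) * 2 ^ k = 1 := by
    rw [← zpow_add₀ two_ne_zero, neg_add_cancel, zpow_zero]
  push_cast
  linear_combination -(2 : ℝ) ^ (-k) * hn - x * h2k

lemma exists_isGoodSet {F : Set ℝ} (hF : IsDyadicWaveletSet F) {σ τ : ℝ → ℝ}
    (hσ : IsInterpolationMap shannonSet F σ) (hτ : IsInterpolationMap F shannonSet τ)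
    (hdom : volume (CongruenceDomain σ ∆ CongruenceDomain τ) = 0) :
    ∃ G, IsGoodSet F σ τ G ∧ ∀ᵐ x, x ∈ G := by
  have hne : ∀ᵐ x : ℝ, x ≠ 0 ∧ x ≠ -(2 * π) := by
    filter_upwards [((countable_singleton _).insert 0).ae_notMem volume] with x hx
    simpa using hx
  have hE : ∀ᵐ x : ℝ, ∃ k : ℤ, (2 : ℝ) ^ k * x ∈ shannonSet :=
    hne.mono fun x hx => exists_two_zpow_mul_mem_shannonSet hx.1
  have hFdil : ∀ᵐ x : ℝ, ∃ k : ℤ, (2 : ℝ) ^ k * x ∈ F := hF.2.2.mono fun x hx => hx.exists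
  let S : Set (ℝ → ℝ) := {σ, τ} ∪ range fun k : ℤ => ((2 : ℝ) ^ k * ·)
  have hS : S.Countable := ((countable_singleton τ).insert σ).union (countable_range _)
  have hQ : ∀ f ∈ S, Measure.QuasiMeasurePreserving f volume volume := by
    rintro f ((rfl | rfl) | ⟨k, rfl⟩)
    exacts [hσ.quasiMeasurePreserving hE, hτ.quasiMeasurePreserving hFdil,
      quasiMeasurePreserving_two_zpow_mul k]
  obtain ⟨G, hGae, hGp, hGS⟩ := exists_ae_mem_mapsTo (p := IsGoodPoint F σ τ) hS hQ <| by
    filter_upwards [hne, hσ.ae_isInterpolationMapAt, hτ.ae_isInterpolationMapAt,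
      measure_symmDiff_eq_zero_iff.1 hdom, hF.2.1, hFdil] with x hx hσx hτx hdomx hFx hFdilx
    exact ⟨hx.1, hx.2, hσx, hτx, Iff.of_eq hdomx, hFx, hFdilx⟩
  exact ⟨G, ⟨hGS σ (by simp [S]), hGS τ (by simp [S]), fun k => hGS _ (Or.inr ⟨k, rfl⟩), hGp⟩,
    hGae⟩

/-- Proposition 6 of the paper.  If `E = [−2π, −π) ∪ [π, 2π)` is the
Shannon wavelet set and `F` is any dyadic wavelet set with `D_E^F = D_F^E` modulo
null sets, then `(E, F)` is an interpolation pair. -/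
theorem stmt_10 (F : Set ℝ) (hF : IsDyadicWaveletSet F)
    (σ τ : ℝ → ℝ)
    (hσ : IsInterpolationMap (Ico (-(2 * π)) (-π) ∪ Ico π (2 * π)) F σ)
    (hτ : IsInterpolationMap F (Ico (-(2 * π)) (-π) ∪ Ico π (2 * π)) τ)
    (hdom : volume ((CongruenceDomain σ) ∆ (CongruenceDomain τ)) = 0) :
    ∀ᵐ s : ℝ ∂volume, σ (σ s) = s := by
  obtain ⟨G, hG, hGae⟩ := exists_isGoodSet hF hσ hτ hdom
  filter_upwards [hGae] with s hs using hG.sigma_sigma hs
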